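/- Reiner's poset of rooted spanning forests SF_n is uniform: for every F ∈ SF_n of rank i (that is, with i edges and hence n − i rooted trees), the principal upper filter U(F) = {G ∈ SF_n : G ≥ F} is isomorphic as a poset to SF_{n−i}. -/

import Mathlib

open Finset

open scoped BigOperators Classical

/-! ## Generic machinery for edge labelings of posets presented by cover relations -/

section Chains

variable {α : Type*} {L : Type*}

/-- The word of labels read along a list of poset elements. -/
def wordOf (lab : α → α → L) : List α → List L
  | x :: y :: rest => lab x y :: wordOf lab (y :: rest)
  | _ => []

/-- `c` is a saturated chain from `x` to `y` with respect to the cover relation `cov`;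
in a graded poset these are exactly the maximal chains of the interval `[x, y]`. -/
def IsSatChain (cov : α → α → Prop) (x y : α) (c : List α) : Prop :=
  c.Chain' cov ∧ c.head? = some x ∧ c.getLast? = some y

/-- A word of labels is increasing if consecutive labels strictly increase. -/
def IncWord (lt : L → L → Prop) (w : List L) : Prop := w.Chain' lt

/-- A word of labels is ascent-free if no consecutive pair of labels strictly increases. -/
def AscFree (lt : L → L → Prop) (w : List L) : Prop := w.Chain' fun a b => ¬ lt a b

/-- The partial order generated by a cover relation. -/
def leOf (cov : α → α → Prop) : α → α → Prop := Relation.ReflTransGen cov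

/-- The strict order generated by a cover relation. -/
def ltOf (cov : α → α → Prop) (a b : α) : Prop := leOf cov a b ∧ a ≠ b

/-- An ER-labeling: every closed interval has a unique increasing maximal chain. -/
def IsERLabeling (cov : α → α → Prop) (lab : α → α → L) (lt : L → L → Prop) : Prop :=
  ∀ x y, leOf cov x y → ∃! c, IsSatChain cov x y c ∧ IncWord lt (wordOf lab c)

/-- The rank two switching property: in every rank-two interval whose increasing chain
has word of labels `ab`, there is a unique chain with word of labels `ba`. -/
def RankTwoSwitch (cov : α → α → Prop) (lab : α → α → L) (lt : L → L → Prop) : Prop :=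
  ∀ x y c a b, IsSatChain cov x y c → IncWord lt (wordOf lab c) → wordOf lab c = [a, b] →
    ∃! c', IsSatChain cov x y c' ∧ wordOf lab c' = [b, a]

/-- In every interval, distinct ascent-free maximal chains have distinct label words. -/
def AscFreeInj (cov : α → α → Prop) (lab : α → α → L) (lt : L → L → Prop) : Prop :=
  ∀ x y c c', IsSatChain cov x y c → IsSatChain cov x y c' →
    AscFree lt (wordOf lab c) → AscFree lt (wordOf lab c') →
    wordOf lab c = wordOf lab c' → c = c'

/-- An EW-labeling. -/
def IsEWLabeling (cov : α → α → Prop) (lab : α → α → L) (lt : L → L → Prop) : Prop :=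
  IsERLabeling cov lab lt ∧ RankTwoSwitch cov lab lt ∧ AscFreeInj cov lab lt

/-- An EL-labeling: every closed interval has a unique increasing maximal chain,
which lexicographically precedes every other maximal chain of the interval. -/
def IsELLabeling (cov : α → α → Prop) (lab : α → α → L) (lt : L → L → Prop) : Prop :=
  ∀ x y, leOf cov x y →
    ∃ c, (IsSatChain cov x y c ∧ IncWord lt (wordOf lab c)) ∧
      ∀ c', IsSatChain cov x y c' → c' ≠ c →
        ¬ IncWord lt (wordOf lab c') ∧ List.Lex lt (wordOf lab c) (wordOf lab c')

end Chains

/-! ## Möbius functions and Whitney numbers -/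

section Whitney

variable {α : Type*} {β : Type*}

/-- Auxiliary Möbius function computed with fuel; for an element of rank `k` of a
graded poset, fuel `k` computes the one-variable Möbius function `μ(0̂, ·)`. -/
noncomputable def muAux (ltr : α → α → Prop) (bot : α) : ℕ → α → ℤ
  | 0, x => if x = bot then 1 else 0
  | k + 1, x => if x = bot then 1 else - ∑ᶠ (y : α) (_ : ltr y x), muAux ltr bot k y

/-- The one-variable Möbius function `μ(0̂, x)` of a graded poset presented by its
cover relation `cov`, minimum `bot` and rank function `rk`. -/
noncomputable def muBot (cov : α → α → Prop) (bot : α) (rk : α → ℕ) (x : α) : ℤ :=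
  muAux (ltOf cov) bot (rk x) x

/-- The `k`-th Whitney number of the first kind. -/
noncomputable def whitney1 (cov : α → α → Prop) (bot : α) (rk : α → ℕ) (k : ℕ) : ℤ :=
  ∑ᶠ (x : α) (_ : rk x = k), muBot cov bot rk x

/-- The `k`-th Whitney number of the second kind. -/
noncomputable def whitney2 (rk : α → ℕ) (k : ℕ) : ℕ :=
  Nat.card {x : α // rk x = k}

/-- Two graded posets are Whitney duals if their Whitney numbers of the first and second
kind are swapped (up to sign). -/
def IsWhitneyDual (covP : α → α → Prop) (botP : α) (rkP : α → ℕ)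
    (covQ : β → β → Prop) (botQ : β) (rkQ : β → ℕ) : Prop :=
  ∀ k, (whitney1 covP botP rkP k).natAbs = whitney2 rkQ k ∧
       (whitney1 covQ botQ rkQ k).natAbs = whitney2 rkP k

/-- Two graded posets are Whitney twins if they have the same Whitney numbers of the first
and of the second kind. -/
def IsWhitneyTwin (covP : α → α → Prop) (botP : α) (rkP : α → ℕ)
    (covQ : β → β → Prop) (botQ : β) (rkQ : β → ℕ) : Prop :=
  ∀ k, whitney1 covP botP rkP k = whitney1 covQ botQ rkQ k ∧ whitney2 rkP k = whitney2 rkQ k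

/-- `(cov, bot, rk)` presents a graded poset with minimum `bot`. -/
def IsGradedPoset (cov : α → α → Prop) (bot : α) (rk : α → ℕ) : Prop :=
  (∀ x, leOf cov bot x) ∧ rk bot = 0 ∧ ∀ x y, cov x y → rk y = rk x + 1

/-- A graded poset has a Whitney dual. -/
def HasWhitneyDual {γ : Type} (cov : γ → γ → Prop) (bot : γ) (rk : γ → ℕ) : Prop :=
  ∃ (β : Type) (_ : Finite β) (covQ : β → β → Prop) (botQ : β) (rkQ : β → ℕ),
    IsGradedPoset covQ botQ rkQ ∧ IsWhitneyDual cov bot rk covQ botQ rkQ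

/-- Isomorphism of the posets generated by two cover relations. -/
def CovPosetIso (covP : α → α → Prop) (covQ : β → β → Prop) : Prop :=
  ∃ e : α ≃ β, ∀ x y, leOf covP x y ↔ leOf covQ (e x) (e y)

end Whitney

/-! ## The label posets `Λₙʷ` and `Λₙ•` (strict order relations)

Labels are triples `(a, b, u)` with `a < b` in `[n]` and `u ∈ {0,1}` (encoded as `Bool`). -/

/-- The strict order of `Λₙʷ = Γ₁ ⊕ ⋯ ⊕ Γ_{n-1}` where `Γ_a` carries the product order
`(a,b)ᵘ ≤ (a,c)ᵛ ↔ b ≤ c ∧ u ≤ v`. -/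
def ltLw (x y : ℕ × ℕ × Bool) : Prop :=
  x.1 < y.1 ∨ (x.1 = y.1 ∧ x.2.1 ≤ y.2.1 ∧ x.2.2 ≤ y.2.2 ∧ x.2 ≠ y.2)

/-- The strict order of `Λₙ• = A₁ ⊕ C₁ ⊕ ⋯ ⊕ A_{n-1} ⊕ C_{n-1}` where `A_a` is the
antichain of the `(a,b)⁰` and `C_a` is the chain of the `(a,b)¹` ordered by `b`. -/
def ltLp (x y : ℕ × ℕ × Bool) : Prop :=
  x.1 < y.1 ∨ (x.1 = y.1 ∧
    ((x.2.2 = false ∧ y.2.2 = true) ∨ (x.2.2 = true ∧ y.2.2 = true ∧ x.2.1 < y.2.1)))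

/-! ## Pointed and weighted partition posets -/

/-- The minimum of a finite set of naturals (`0` for the empty set). -/
def minB (B : Finset ℕ) : ℕ := B.min.untopD 0

/-- Pointed partitions of the ground set `A`: partitions of `A` into blocks, each block
carrying a distinguished (pointed) element.  A pointed block is a pair `(B, p)` with `p ∈ B`. -/
abbrev PPart (A : Finset ℕ) : Type :=
  {π : Finset (Finset ℕ × ℕ) //
    (∀ b ∈ π, b.2 ∈ b.1) ∧
    (∀ b ∈ π, ∀ b' ∈ π, b ≠ b' → Disjoint b.1 b'.1) ∧
    π.biUnion Prod.fst = A}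

/-- The cover relation of the pointed partition poset: merge two pointed blocks, the merged
block being pointed at the pointed element of one of the two. -/
def covPP {A : Finset ℕ} (π π' : PPart A) : Prop :=
  ∃ b1 ∈ π.1, ∃ b2 ∈ π.1, minB b1.1 < minB b2.1 ∧
    ∃ p : ℕ, (p = b1.2 ∨ p = b2.2) ∧
      π'.1 = insert (b1.1 ∪ b2.1, p) ((π.1.erase b1).erase b2)

/-- The labeling `λ•` (as a bare label map): the cover `u`-merging blocks `A, B` with
`min A < min B` gets the label `(min A, min B, u)`, where `u = 1` exactly when the merged
block is pointed at the pointed element of `A`. -/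
noncomputable def labPP {A : Finset ℕ} (π π' : PPart A) : ℕ × ℕ × Bool :=
  let olds := π.1 \ π'.1
  let mins := olds.image (fun b => minB b.1)
  (mins.min.untopD 0, mins.max.unbotD 0,
    if ∃ b ∈ olds, minB b.1 = mins.min.untopD 0 ∧ ∃ d ∈ π'.1 \ π.1, d.2 = b.2
      then true else false)

/-- The minimum of the pointed partition poset: all blocks are pointed singletons. -/
def botPP (A : Finset ℕ) : PPart A :=
  ⟨A.image fun i => ({i}, i), by
    refine ⟨?_, ?_, ?_⟩
    · intro b hb
      obtain ⟨i, -, rfl⟩ := Finset.mem_image.1 hb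
      exact Finset.mem_singleton_self i
    · intro b hb b' hb' hne
      obtain ⟨i, -, rfl⟩ := Finset.mem_image.1 hb
      obtain ⟨j, -, rfl⟩ := Finset.mem_image.1 hb'
      have hij : i ≠ j := fun h => hne (by rw [h])
      simp [Finset.disjoint_left, hij]
    · ext x
      simp⟩

/-- The rank function of the pointed partition poset. -/
def rkPP {A : Finset ℕ} (π : PPart A) : ℕ := A.card - π.1.card

/-- Weighted partitions of the ground set `A`: partitions of `A` into blocks, each block `B`
carrying a weight `v` with `0 ≤ v ≤ |B| - 1`. -/
abbrev WPart (A : Finset ℕ) : Type :=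
  {π : Finset (Finset ℕ × ℕ) //
    (∀ b ∈ π, b.2 < b.1.card) ∧
    (∀ b ∈ π, ∀ b' ∈ π, b ≠ b' → Disjoint b.1 b'.1) ∧
    π.biUnion Prod.fst = A}

/-- The cover relation of the weighted partition poset: merge blocks `A^v, B^w` into
`(A ∪ B)^(v+w+u)` for some `u ∈ {0,1}`. -/
def covWP {A : Finset ℕ} (π π' : WPart A) : Prop :=
  ∃ b1 ∈ π.1, ∃ b2 ∈ π.1, minB b1.1 < minB b2.1 ∧ ∃ u : Bool,
    π'.1 = insert (b1.1 ∪ b2.1, b1.2 + b2.2 + (if u then 1 else 0)) ((π.1.erase b1).erase b2)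

/-- The labeling `λ_w` (as a bare label map): the cover merging `A^v, B^w` with
`min A < min B` into `(A ∪ B)^(v+w+u)` gets the label `(min A, min B, u)`. -/
noncomputable def labWP {A : Finset ℕ} (π π' : WPart A) : ℕ × ℕ × Bool :=
  let olds := π.1 \ π'.1
  let mins := olds.image (fun b => minB b.1)
  (mins.min.untopD 0, mins.max.unbotD 0,
    if (π'.1 \ π.1).sum Prod.snd = olds.sum Prod.snd + 1 then true else false)

/-- The minimum of the weighted partition poset: all blocks singletons of weight `0`. -/
def botWP (A : Finset ℕ) : WPart A :=
  ⟨A.image fun i => ({i}, 0), by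
    refine ⟨?_, ?_, ?_⟩
    · intro b hb
      obtain ⟨i, -, rfl⟩ := Finset.mem_image.1 hb
      simp
    · intro b hb b' hb' hne
      obtain ⟨i, -, rfl⟩ := Finset.mem_image.1 hb
      obtain ⟨j, -, rfl⟩ := Finset.mem_image.1 hb'
      have hij : i ≠ j := fun h => hne (by rw [h])
      simp [Finset.disjoint_left, hij]
    · ext x
      simp⟩

/-- The rank function of the weighted partition poset. -/
def rkWP {A : Finset ℕ} (π : WPart A) : ℕ := A.card - π.1.card
/-! ## Bicolored binary trees and Lyndon forests -/

/-- Planar binary trees with `ℕ`-labeled leaves and `Bool`-colored internal vertices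
(`false` = color 0, `true` = color 1). -/
inductive BT : Type
  | leaf : ℕ → BT
  | node : Bool → BT → BT → BT
deriving DecidableEq

namespace BT

/-- The valency: the minimum leaf label of a tree. -/
def nu : BT → ℕ
  | leaf a => a
  | node _ l r => min l.nu r.nu

/-- The set of leaf labels of a tree. -/
def leaves : BT → Finset ℕ
  | leaf a => {a}
  | node _ l r => l.leaves ∪ r.leaves

/-- The number of internal vertices of a tree. -/
def internals : BT → ℕ
  | leaf _ => 0
  | node _ l r => l.internals + r.internals + 1

/-- A tree is normalized if its leaf labels are distinct and every internal vertex has the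
same valency as its left child. -/
def normalized : BT → Prop
  | leaf _ => True
  | node _ l r => l.normalized ∧ r.normalized ∧ Disjoint l.leaves r.leaves ∧ l.nu < r.nu

/-- The pointed Lyndon condition: at every internal vertex `v` with internal left child,
`color (L v) ≥ color v`, and if `color (L v) = color v = 1` then `v` is a Lyndon vertex,
i.e. `ν (R (L v)) > ν (R v)`. -/
def pLyn : BT → Prop
  | leaf _ => True
  | node c l r => l.pLyn ∧ r.pLyn ∧
      (match l with
       | leaf _ => True
       | node c' _ r' => c ≤ c' ∧ ((c' = c ∧ c = true) → r.nu < r'.nu))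

/-- The bicolored Lyndon condition: every internal vertex with internal left child is
Lyndon (`ν (R (L v)) > ν (R v)`) or satisfies `color (L v) > color v`. -/
def wLyn : BT → Prop
  | leaf _ => True
  | node c l r => l.wLyn ∧ r.wLyn ∧
      (match l with
       | leaf _ => True
       | node c' _ r' => r.nu < r'.nu ∨ c < c')

/-- The pointed element of a bicolored tree: a `1`-colored vertex keeps the point of its
left subtree and a `0`-colored vertex keeps the point of its right subtree. -/
def ppt : BT → ℕ
  | leaf a => a
  | node c l r => if c then l.ppt else r.ppt

end BT

/-- `u`-merging of two pointed Lyndon trees: create a new root of color `u` with the two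
trees as subtrees, then repeatedly slide the new vertex together with its right subtree
past its left child until the pointed Lyndon condition holds at the new vertex. -/
def mergeP (u : Bool) : BT → BT → BT
  | BT.leaf a, t2 => BT.node u (BT.leaf a) t2
  | BT.node c a b, t2 =>
      if u ≤ c ∧ ((c = true ∧ u = true) → t2.nu < b.nu)
      then BT.node u (BT.node c a b) t2
      else BT.node c (mergeP u a t2) b

/-- `u`-merging of two bicolored Lyndon trees: create a new root of color `u` with the two
trees as subtrees, then repeatedly slide the new vertex together with its right subtree
past its left child until the bicolored Lyndon condition holds at the new vertex. -/
def mergeW (u : Bool) : BT → BT → BT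
  | BT.leaf a, t2 => BT.node u (BT.leaf a) t2
  | BT.node c a b, t2 =>
      if t2.nu < b.nu ∨ u < c
      then BT.node u (BT.node c a b) t2
      else BT.node c (mergeW u a t2) b

/-- A valid forest on the ground set `[n]`, each tree normalized and satisfying `P`, the
trees having pairwise disjoint leaf sets which together cover `[n] = {1, …, n}`. -/
def ForestValid (n : ℕ) (P : BT → Prop) (F : Finset BT) : Prop :=
  (∀ t ∈ F, t.normalized ∧ P t) ∧
  (∀ t ∈ F, ∀ t' ∈ F, t ≠ t' → Disjoint t.leaves t'.leaves) ∧
  F.biUnion BT.leaves = Finset.Icc 1 n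

/-- The set of pointed Lyndon forests on `[n]`. -/
abbrev FLynP (n : ℕ) : Type := {F : Finset BT // ForestValid n BT.pLyn F}

/-- The set of bicolored Lyndon forests on `[n]`. -/
abbrev FLynW (n : ℕ) : Type := {F : Finset BT // ForestValid n BT.wLyn F}

/-- The cover relation on forests: `u`-merge two of the trees (the one with smaller minimum
leaf label going to the left). -/
def covForest (merge : Bool → BT → BT → BT) (F F' : Finset BT) : Prop :=
  ∃ t1 ∈ F, ∃ t2 ∈ F, t1.nu < t2.nu ∧ ∃ u : Bool,
    F' = insert (merge u t1 t2) ((F.erase t1).erase t2)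

/-- The cover relation of the poset of pointed Lyndon forests `FLyn_n^•`. -/
def covFP {n : ℕ} (F F' : FLynP n) : Prop := covForest mergeP F.1 F'.1

/-- The cover relation of the poset of bicolored Lyndon forests `FLyn_n^w`. -/
def covFW {n : ℕ} (F F' : FLynW n) : Prop := covForest mergeW F.1 F'.1

/-- The forest of `n` isolated leaves. -/
def botForest (n : ℕ) : Finset BT := (Finset.Icc 1 n).image BT.leaf

theorem botForest_valid (n : ℕ) (P : BT → Prop) (hP : ∀ a, P (BT.leaf a)) :
    ForestValid n P (botForest n) := by
  refine ⟨?_, ?_, ?_⟩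
  · intro t ht
    obtain ⟨i, -, rfl⟩ := Finset.mem_image.1 ht
    exact ⟨trivial, hP i⟩
  · intro t ht t' ht' hne
    obtain ⟨i, -, rfl⟩ := Finset.mem_image.1 ht
    obtain ⟨j, -, rfl⟩ := Finset.mem_image.1 ht'
    have hij : i ≠ j := fun h => hne (by rw [h])
    simp only [BT.leaves]
    simp [Finset.disjoint_left, hij]
  · ext x
    simp [botForest, BT.leaves]

/-- The minimum of the poset of pointed Lyndon forests. -/
def botFP (n : ℕ) : FLynP n := ⟨botForest n, botForest_valid n _ fun _ => trivial⟩

/-- The minimum of the poset of bicolored Lyndon forests. -/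
def botFW (n : ℕ) : FLynW n := ⟨botForest n, botForest_valid n _ fun _ => trivial⟩

/-- The rank of a forest: its total number of internal vertices. -/
def rkForest (F : Finset BT) : ℕ := F.sum BT.internals

/-- The rank function of `FLyn_n^•`. -/
def rkFP {n : ℕ} (F : FLynP n) : ℕ := rkForest F.1

/-- The rank function of `FLyn_n^w`. -/
def rkFW {n : ℕ} (F : FLynW n) : ℕ := rkForest F.1

/-! ## The Whitney dual construction `R_λ(P)` -/

section RPoset

variable {α : Type*} {L : Type*}

/-- Swap the leftmost ascent of a word of labels. -/
noncomputable def swapFirstAscent (lt : L → L → Prop) : List L → List L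
  | a :: b :: rest => if lt a b then b :: a :: rest else a :: swapFirstAscent lt (b :: rest)
  | w => w

/-- Sort a word of labels by repeatedly swapping its leftmost ascent until it is
ascent-free. -/
noncomputable def sortWord (lt : L → L → Prop) (w : List L) : List L :=
  (swapFirstAscent lt)^[w.length * w.length] w

/-- The underlying set of the Whitney dual `R_λ(P)`: pairs `(x, w)` where `w` is the label
word of an ascent-free saturated chain from `0̂` to `x`. -/
abbrev RPoset (cov : α → α → Prop) (lab : α → α → L) (lt : L → L → Prop) (bot : α) : Type _ :=
  {q : α × List L //
    ∃ c, IsSatChain cov bot q.1 c ∧ AscFree lt (wordOf lab c) ∧ wordOf lab c = q.2}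

/-- The cover relation of `R_λ(P)`: `(x, w) ⋖ (y, u)` iff `x ⋖ y` and `u` is obtained by
sorting the label of `x ⋖ y` into `w`. -/
def covR (cov : α → α → Prop) (lab : α → α → L) (lt : L → L → Prop) (bot : α)
    (p q : RPoset cov lab lt bot) : Prop :=
  cov p.1.1 q.1.1 ∧ q.1.2 = sortWord lt (p.1.2 ++ [lab p.1.1 q.1.1])

end RPoset

/-! ## Reiner's poset of rooted spanning forests -/

/-- A rooted spanning forest on `[n]`, encoded by its parent function: `f i` is the parent
of the vertex `i` (`f i = i` for roots), vertices outside `[n]` being fixed, and every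
vertex reaching a root after finitely many steps (acyclicity). -/
def SFvalid (n : ℕ) (f : ℕ → ℕ) : Prop :=
  (∀ i ∈ Finset.Icc 1 n, f i ∈ Finset.Icc 1 n) ∧
  (∀ i, i ∉ Finset.Icc 1 n → f i = i) ∧
  (∀ i, ∃ k, f^[k + 1] i = f^[k] i)

/-- Reiner's poset `SF_n` of rooted spanning forests of the complete graph on `[n]`. -/
abbrev SF (n : ℕ) : Type := {f : ℕ → ℕ // SFvalid n f}

/-- The cover relation of `SF_n`: add an edge between the roots of two trees, one of the
two roots becoming the root of the merged tree. -/
def covSF {n : ℕ} (f g : SF n) : Prop :=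
  ∃ r1 ∈ Finset.Icc 1 n, ∃ r2 ∈ Finset.Icc 1 n, r1 ≠ r2 ∧
    f.1 r1 = r1 ∧ f.1 r2 = r2 ∧
    (g.1 = Function.update f.1 r1 r2 ∨ g.1 = Function.update f.1 r2 r1)

/-- The rank of a rooted spanning forest: its number of edges. -/
def rkSF {n : ℕ} (f : SF n) : ℕ := ((Finset.Icc 1 n).filter fun i => f.1 i ≠ i).card
/-! ## Further constructions used in particular statements -/

/-- The map `Φ` on underlying finsets: a pointed block `(B, q)` of a pointed partition
above `α` is sent to the set of minima of the `α`-blocks contained in `B`, pointed at the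
minimum of the `α`-block containing `q`. -/
noncomputable def PhiMap (af : Finset (Finset ℕ × ℕ)) (pf : Finset (Finset ℕ × ℕ)) :
    Finset (Finset ℕ × ℕ) :=
  pf.image fun b =>
    ((af.filter fun c => c.1 ⊆ b.1).image fun c => minB c.1,
     ((af.filter fun c => b.2 ∈ c.1).image fun c => minB c.1).min.untopD 0)

/-- The expected word of labels of the unique increasing maximal chain of the interval
`[0̂, [n]^p]` of the pointed partition poset:
`(1,2)¹ ⋯ (1,n)¹` if `p = 1`, and `(1,p)⁰ (1,2)¹ ⋯ (1,p-1)¹ (1,p+1)¹ ⋯ (1,n)¹` otherwise. -/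
def expectedWordP (n p : ℕ) : List (ℕ × ℕ × Bool) :=
  let base := (List.range (n - 1)).map fun i => ((1 : ℕ), i + 2, true)
  if p = 1 then base else ((1 : ℕ), p, false) :: base.erase (1, p, true)

/-- Merge two words of labels, each with non-increasing first components, into a single
word with non-increasing first components. -/
def mergeByNu : List (ℕ × ℕ × Bool) → List (ℕ × ℕ × Bool) → List (ℕ × ℕ × Bool)
  | [], ys => ys
  | xs, [] => xs
  | x :: xs, y :: ys =>
      if y.1 ≤ x.1 then x :: mergeByNu xs (y :: ys) else y :: mergeByNu (x :: xs) ys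
termination_by xs ys => xs.length + ys.length

/-- The word of labels of a tree read along the reverse-minimal linear extension of its
internal vertices: the internal vertex `v` contributes `(ν (L v), ν (R v), color v)`, the
vertices being listed with non-increasing valencies (descendants first among equal
valencies). -/
def BT.rmword : BT → List (ℕ × ℕ × Bool)
  | BT.leaf _ => []
  | BT.node c l r => mergeByNu l.rmword r.rmword ++ [(l.nu, r.nu, c)]

/-- The word of labels of the saturated chain `c(F)` associated to a forest `F`, read along
the reverse-minimal linear extension of the internal vertices of `F`. -/
noncomputable def forestWord (F : Finset BT) : List (ℕ × ℕ × Bool) :=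
  (F.toList.map BT.rmword).foldr mergeByNu []

/-- `TLyn_{n,p}^•`: pointed Lyndon trees on `[n]` whose associated chain ends at `[n]^p`,
i.e. whose tracked pointed element is `p`. -/
abbrev TLynBullet (n p : ℕ) : Type :=
  {T : BT // T.normalized ∧ T.pLyn ∧ T.leaves = Finset.Icc 1 n ∧ T.ppt = p}

/-- The labeling `λ̃` of `Πₙ•` proposed by Bellier-Millès, Delcroix-Oger and Hoffbeck:
the cover `u`-merging blocks with minima `a < b` in a pointed partition `π` with `|π|`
blocks is labeled `(b, a + n - |π|)` if `u = 0` and `(b, b + n - |π|)` if `u = 1`. -/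
noncomputable def labT (n : ℕ) {A : Finset ℕ} (π π' : PPart A) : ℕ × ℕ :=
  let olds := π.1 \ π'.1
  let mins := olds.image fun b => minB b.1
  let a := mins.min.untopD 0
  let b := mins.max.unbotD 0
  if ∃ c ∈ olds, minB c.1 = a ∧ ∃ d ∈ π'.1 \ π.1, d.2 = c.2
  then (b, b + n - π.1.card)
  else (b, a + n - π.1.card)

/-- The (strict) lexicographic order on `ℕ × ℕ`. -/
def ltT (x y : ℕ × ℕ) : Prop := x.1 < y.1 ∨ (x.1 = y.1 ∧ x.2 < y.2)

/-!
A forest `G` lies above `F` exactly when it keeps every edge of `F` and its other edges join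
roots of `F` to roots of `F`: a cover adds such an edge, and conversely, removing from `G` an
edge from a root of `F` to a root of `G` is the inverse of a cover, so `G` descends to `F`.
Hence the forests above `F` are `F` together with an arbitrary rooted forest on its `n - i`
roots; relabelling these roots by `[n - i]` gives the isomorphism. It respects the order
because the same description applies to `G ≤ G'`, and its condition is transported by the
relabelling.
-/

open Function

section RootedForests

variable {n : ℕ}

theorem exists_iterate_fixed_of_forall_eq_or {f g : ℕ → ℕ}
    (hf : ∀ x, ∃ k, f^[k + 1] x = f^[k] x)
    (h : ∀ x, (∃ k, g^[k + 1] x = g^[k] x) ∨ g x = f x) (x : ℕ) :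
    ∃ k, g^[k + 1] x = g^[k] x := by
  obtain ⟨k, hk⟩ := hf x
  induction k generalizing x with
  | zero =>
    rcases h x with hx | hx
    · exact hx
    · exact ⟨0, by simpa [hx] using hk⟩
  | succ k ih =>
    rcases h x with hx | hx
    · exact hx
    · obtain ⟨l, hl⟩ := ih (f x) (by simpa only [iterate_succ_apply] using hk)
      exact ⟨l + 1, by simpa only [iterate_succ_apply, hx] using hl⟩

theorem SFvalid.update_self {f : ℕ → ℕ} (hf : SFvalid n f) {r : ℕ} (hr : r ∈ Icc 1 n) :
    SFvalid n (update f r r) := by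
  refine ⟨fun x hx => ?_, fun x hx => ?_,
    exists_iterate_fixed_of_forall_eq_or hf.2.2 fun x => ?_⟩
  · rcases eq_or_ne x r with rfl | hxr
    · simpa using hx
    · simpa [hxr] using hf.1 x hx
  · have hxr : x ≠ r := by rintro rfl; exact hx hr
    simpa [hxr] using hf.2.1 x hx
  · rcases eq_or_ne x r with rfl | hxr
    · exact Or.inl ⟨0, by simp⟩
    · exact Or.inr (update_of_ne hxr _ _)

def roots (n : ℕ) (f : ℕ → ℕ) : Finset ℕ := (Icc 1 n).filter fun x => f x = x

theorem mem_roots {f : ℕ → ℕ} {x : ℕ} : x ∈ roots n f ↔ x ∈ Icc 1 n ∧ f x = x := mem_filter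

theorem card_roots (F : SF n) : (roots n F.1).card = n - rkSF F := by
  have := card_filter_add_card_filter_not (s := Icc 1 n) (p := fun x => F.1 x = x)
  rw [Nat.card_Icc, Nat.add_sub_cancel] at this
  exact Nat.eq_sub_of_add_eq this

structure Extends (F G : ℕ → ℕ) : Prop where
  nonroot : ∀ x, F x ≠ x → G x = F x
  root : ∀ x, F x = x → F (G x) = G x

theorem Extends.refl (F : ℕ → ℕ) : Extends F F :=
  ⟨fun _ _ => rfl, fun x h => by rw [h, h]⟩

theorem Extends.root_of_root {F G : ℕ → ℕ} (h : Extends F G) {x : ℕ} (hx : G x = x) :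
    F x = x := by
  by_contra hne
  exact hne ((h.nonroot x hne).symm.trans hx)

theorem Extends.update {F G : ℕ → ℕ} (h : Extends F G) {a b : ℕ} (ha : F a = a)
    (hb : F b = b) : Extends F (update G a b) := by
  refine ⟨fun x hx => ?_, fun x hx => ?_⟩
  · have hxa : x ≠ a := by rintro rfl; exact hx ha
    rw [update_of_ne hxa, h.nonroot x hx]
  · rcases eq_or_ne x a with rfl | hxa
    · simpa using hb
    · simpa [hxa] using h.root x hx

theorem Extends.apply_mem_roots {F G : ℕ → ℕ} (h : Extends F G) (hG : SFvalid n G) {x : ℕ}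
    (hx : x ∈ roots n F) : G x ∈ roots n F :=
  mem_roots.2 ⟨hG.1 x (mem_roots.1 hx).1, h.root x (mem_roots.1 hx).2⟩

theorem Extends.exists_edge_to_root {F G : ℕ → ℕ} (h : Extends F G) (hG : SFvalid n G)
    {x : ℕ} (hx : x ∈ roots n F) (hGx : G x ≠ x) :
    ∃ r ∈ roots n F, G r ≠ r ∧ G (G r) = G r := by
  obtain ⟨k, hk⟩ := hG.2.2 x
  induction k generalizing x with
  | zero => exact absurd hk hGx
  | succ k ih =>
    by_cases hroot : G (G x) = G x
    · exact ⟨x, hx, hGx, hroot⟩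
    · exact ih (h.apply_mem_roots hG hx) hroot (by simpa only [iterate_succ_apply] using hk)

theorem extends_of_leOf {F G : SF n} (h : leOf covSF F G) : Extends F.1 G.1 := by
  induction h with
  | refl => exact Extends.refl F.1
  | tail _ hcov ih =>
    obtain ⟨r1, -, r2, -, -, h1, h2, hc | hc⟩ := hcov <;> rw [hc]
    · exact ih.update (ih.root_of_root h1) (ih.root_of_root h2)
    · exact ih.update (ih.root_of_root h2) (ih.root_of_root h1)

theorem leOf_of_extends {F G : SF n} (h : Extends F.1 G.1) : leOf covSF F G := by
  induction hk : ((roots n F.1).filter fun x => G.1 x ≠ x).card generalizing G with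
  | zero =>
    suffices G = F from this ▸ Relation.ReflTransGen.refl
    refine Subtype.ext (funext fun x => ?_)
    by_cases hFx : F.1 x = x
    · by_cases hx : x ∈ Icc 1 n
      · have hGx : G.1 x = x := by
          by_contra hGx
          have hmem : x ∈ (roots n F.1).filter fun x => G.1 x ≠ x :=
            mem_filter.2 ⟨mem_roots.2 ⟨hx, hFx⟩, hGx⟩
          rw [card_eq_zero.1 hk] at hmem
          exact notMem_empty x hmem
        rw [hGx, hFx]
      · rw [G.2.2.1 x hx, F.2.2.1 x hx]
    · exact h.nonroot x hFx
  | succ k ih =>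
    obtain ⟨x, hx⟩ : ((roots n F.1).filter fun x => G.1 x ≠ x).Nonempty :=
      card_pos.1 (by omega)
    obtain ⟨hxF, hGx⟩ := mem_filter.1 hx
    obtain ⟨r, hrF, hGr, hGGr⟩ := h.exists_edge_to_root G.2 hxF hGx
    obtain ⟨hr, hFr⟩ := mem_roots.1 hrF
    let G' : SF n := ⟨update G.1 r r, G.2.update_self hr⟩
    have hG' : Extends F.1 G'.1 := h.update hFr hFr
    have hrmoved : r ∈ (roots n F.1).filter fun x => G.1 x ≠ x := mem_filter.2 ⟨hrF, hGr⟩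
    have hmoved : ((roots n F.1).filter fun x => G'.1 x ≠ x) =
        ((roots n F.1).filter fun x => G.1 x ≠ x).erase r := by
      ext y
      rcases eq_or_ne y r with rfl | hyr <;> simp [G', *]
    refine .tail (ih hG' ?_) ⟨r, hr, G.1 r, G.2.1 r hr, hGr.symm, by simp [G'], ?_, Or.inl ?_⟩
    · rw [hmoved, card_erase_of_mem hrmoved, hk, Nat.add_sub_cancel]
    · simpa [G', update_of_ne hGr] using hGGr
    · simp [G']

theorem leOf_covSF_iff_extends {F G : SF n} : leOf covSF F G ↔ Extends F.1 G.1 :=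
  ⟨extends_of_leOf, leOf_of_extends⟩

end RootedForests

section Relabel

variable {n m : ℕ} {F σ τ : ℕ → ℕ}

structure IsRootRelabel (n m : ℕ) (F σ τ : ℕ → ℕ) : Prop where
  mapsTo_σ : Set.MapsTo σ (roots n F) (Icc 1 m)
  mapsTo_τ : Set.MapsTo τ (Icc 1 m) (roots n F)
  invOn : Set.InvOn τ σ (roots n F) (Icc 1 m)

theorem exists_isRootRelabel (n : ℕ) (F : ℕ → ℕ) :
    ∃ σ τ, IsRootRelabel n (roots n F).card F σ τ := by
  obtain ⟨σ, hσ⟩ := (roots n F).finite_toSet.exists_bijOn_of_encard_eq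
    (t := ((Icc 1 (roots n F).card : Finset ℕ) : Set ℕ)) (by
      rw [Set.encard_coe_eq_coe_finsetCard, Set.encard_coe_eq_coe_finsetCard, Nat.card_Icc,
        Nat.add_sub_cancel])
  exact ⟨σ, invFunOn σ (roots n F), hσ.mapsTo, hσ.surjOn.mapsTo_invFunOn,
    hσ.invOn_invFunOn⟩

/-- The forest that `G` induces on the roots of `F`, transported to `[m]`. -/
def rootForest (m : ℕ) (σ τ G : ℕ → ℕ) : ℕ → ℕ :=
  fun j => if j ∈ Icc 1 m then σ (G (τ j)) else j

def graft (n : ℕ) (F σ τ g : ℕ → ℕ) : ℕ → ℕ :=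
  fun x => if x ∈ roots n F then τ (g (σ x)) else F x

namespace IsRootRelabel

variable (hR : IsRootRelabel n m F σ τ)
include hR

theorem iterate_rootForest {G : ℕ → ℕ} (hFG : Extends F G) (hG : SFvalid n G) (k : ℕ) {j : ℕ}
    (hj : j ∈ Icc 1 m) : (rootForest m σ τ G)^[k] j = σ (G^[k] (τ j)) := by
  induction k generalizing j with
  | zero => exact (hR.invOn.2 hj).symm
  | succ k ih =>
    have hGτj : G (τ j) ∈ roots n F := hFG.apply_mem_roots hG (hR.mapsTo_τ hj)
    rw [iterate_succ_apply, rootForest, if_pos hj, ih (hR.mapsTo_σ hGτj), hR.invOn.1 hGτj,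
      ← iterate_succ_apply]

theorem sfvalid_rootForest {G : ℕ → ℕ} (hFG : Extends F G) (hG : SFvalid n G) :
    SFvalid m (rootForest m σ τ G) := by
  refine ⟨fun j hj => ?_, fun j hj => if_neg hj, fun j => ?_⟩
  · rw [rootForest, if_pos hj]
    exact hR.mapsTo_σ (hFG.apply_mem_roots hG (hR.mapsTo_τ hj))
  · by_cases hj : j ∈ Icc 1 m
    · obtain ⟨k, hk⟩ := hG.2.2 (τ j)
      exact ⟨k, by rw [hR.iterate_rootForest hFG hG _ hj, hR.iterate_rootForest hFG hG _ hj, hk]⟩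
    · exact ⟨0, if_neg hj⟩

theorem iterate_graft {g : ℕ → ℕ} (hg : SFvalid m g) (k : ℕ) {x : ℕ} (hx : x ∈ roots n F) :
    (graft n F σ τ g)^[k] x = τ (g^[k] (σ x)) := by
  induction k generalizing x with
  | zero => exact (hR.invOn.1 hx).symm
  | succ k ih =>
    have hgσx : g (σ x) ∈ Icc 1 m := hg.1 _ (hR.mapsTo_σ hx)
    rw [iterate_succ_apply, graft, if_pos hx, ih (hR.mapsTo_τ hgσx), hR.invOn.2 hgσx,
      ← iterate_succ_apply]

theorem sfvalid_graft (hF : SFvalid n F) {g : ℕ → ℕ} (hg : SFvalid m g) :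
    SFvalid n (graft n F σ τ g) := by
  refine ⟨fun x hx => ?_, fun x hx => ?_,
    exists_iterate_fixed_of_forall_eq_or hF.2.2 fun x => ?_⟩
  · by_cases hxR : x ∈ roots n F
    · rw [graft, if_pos hxR]
      exact (mem_roots.1 (hR.mapsTo_τ (hg.1 _ (hR.mapsTo_σ hxR)))).1
    · rw [graft, if_neg hxR]
      exact hF.1 x hx
  · rw [graft, if_neg fun hxR => hx (mem_roots.1 hxR).1]
    exact hF.2.1 x hx
  · by_cases hxR : x ∈ roots n F
    · obtain ⟨k, hk⟩ := hg.2.2 (σ x)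
      exact Or.inl ⟨k, by rw [hR.iterate_graft hg _ hxR, hR.iterate_graft hg _ hxR, hk]⟩
    · exact Or.inr (if_neg hxR)

theorem extends_graft {g : ℕ → ℕ} (hg : SFvalid m g) : Extends F (graft n F σ τ g) := by
  refine ⟨fun x hx => if_neg fun hxR => hx (mem_roots.1 hxR).2, fun x hFx => ?_⟩
  by_cases hxR : x ∈ roots n F
  · rw [graft, if_pos hxR]
    exact (mem_roots.1 (hR.mapsTo_τ (hg.1 _ (hR.mapsTo_σ hxR)))).2
  · rw [graft, if_neg hxR, hFx, hFx]

theorem graft_rootForest {G : ℕ → ℕ} (hFG : Extends F G) (hG : SFvalid n G) :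
    graft n F σ τ (rootForest m σ τ G) = G := by
  funext x
  by_cases hxR : x ∈ roots n F
  · have hGx := hFG.apply_mem_roots hG hxR
    rw [graft, if_pos hxR, rootForest, if_pos (mem_coe.1 (hR.mapsTo_σ hxR)), hR.invOn.1 hxR,
      hR.invOn.1 hGx]
  · rw [graft, if_neg hxR]
    by_cases hFx : F x = x
    · have hx : x ∉ Icc 1 n := fun hx => hxR (mem_roots.2 ⟨hx, hFx⟩)
      rw [hFx, hG.2.1 x hx]
    · exact (hFG.nonroot x hFx).symm

theorem rootForest_graft {g : ℕ → ℕ} (hg : SFvalid m g) :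
    rootForest m σ τ (graft n F σ τ g) = g := by
  funext j
  by_cases hj : j ∈ Icc 1 m
  · rw [rootForest, if_pos hj, graft, if_pos (mem_coe.1 (hR.mapsTo_τ hj)), hR.invOn.2 hj,
      hR.invOn.2 (hg.1 j hj)]
  · rw [rootForest, if_neg hj, hg.2.1 j hj]

theorem graft_apply_τ (g : ℕ → ℕ) {j : ℕ} (hj : j ∈ Icc 1 m) :
    graft n F σ τ g (τ j) = τ (g j) := by
  rw [graft, if_pos (mem_coe.1 (hR.mapsTo_τ hj)), hR.invOn.2 hj]

theorem extends_graft_iff {g g' : ℕ → ℕ} (hg : SFvalid m g) (hg' : SFvalid m g') :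
    Extends (graft n F σ τ g) (graft n F σ τ g') ↔ Extends g g' := by
  have hτ : Set.InjOn τ (Icc 1 m) := hR.invOn.2.injOn
  constructor
  · intro h
    refine ⟨fun j hgj => ?_, fun j hgj => ?_⟩
    · have hj : j ∈ Icc 1 m := by by_contra hj; exact hgj (hg.2.1 j hj)
      have := h.nonroot (τ j) fun he => hgj (hτ (hg.1 j hj) hj (by rwa [← hR.graft_apply_τ g hj]))
      rw [hR.graft_apply_τ g hj, hR.graft_apply_τ g' hj] at this
      exact hτ (hg'.1 j hj) (hg.1 j hj) this
    · by_cases hj : j ∈ Icc 1 m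
      · have := h.root (τ j) (by rw [hR.graft_apply_τ g hj, hgj])
        rw [hR.graft_apply_τ g' hj, hR.graft_apply_τ g (hg'.1 j hj)] at this
        exact hτ (hg.1 _ (hg'.1 j hj)) (hg'.1 j hj) this
      · rw [hg'.2.1 j hj]
        exact hgj
  · intro h
    refine ⟨fun x hx => ?_, fun x hx => ?_⟩ <;> by_cases hxR : x ∈ roots n F
    · obtain ⟨j, hj, rfl⟩ : ∃ j ∈ Icc 1 m, τ j = x := ⟨σ x, hR.mapsTo_σ hxR, hR.invOn.1 hxR⟩
      rw [hR.graft_apply_τ g hj] at hx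
      rw [hR.graft_apply_τ g hj, hR.graft_apply_τ g' hj,
        h.nonroot j fun hgj => hx (congrArg τ hgj)]
    · rw [graft, if_neg hxR, graft, if_neg hxR]
    · obtain ⟨j, hj, rfl⟩ : ∃ j ∈ Icc 1 m, τ j = x := ⟨σ x, hR.mapsTo_σ hxR, hR.invOn.1 hxR⟩
      rw [hR.graft_apply_τ g hj] at hx
      rw [hR.graft_apply_τ g' hj, hR.graft_apply_τ g (hg'.1 j hj),
        h.root j (hτ (hg.1 j hj) hj hx)]
    · have hg'x : graft n F σ τ g' x = x := by
        rw [graft, if_neg hxR] at hx ⊢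
        exact hx
      rw [hg'x]
      exact hx

end IsRootRelabel

end Relabel

section UpperSet

variable {n m : ℕ} {σ τ : ℕ → ℕ} {F : SF n}

def IsRootRelabel.upperEquiv (hR : IsRootRelabel n m F.1 σ τ) :
    {G : SF n // leOf covSF F G} ≃ SF m where
  toFun G := ⟨rootForest m σ τ G.1.1, hR.sfvalid_rootForest (extends_of_leOf G.2) G.1.2⟩
  invFun g := ⟨⟨graft n F.1 σ τ g.1, hR.sfvalid_graft F.2 g.2⟩,
    leOf_of_extends (hR.extends_graft g.2)⟩
  left_inv G := Subtype.ext (Subtype.ext (hR.graft_rootForest (extends_of_leOf G.2) G.1.2))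
  right_inv g := Subtype.ext (hR.rootForest_graft g.2)

theorem IsRootRelabel.leOf_iff_leOf_upperEquiv (hR : IsRootRelabel n m F.1 σ τ)
    (G G' : {G : SF n // leOf covSF F G}) :
    leOf covSF G.1 G'.1 ↔ leOf covSF (hR.upperEquiv G) (hR.upperEquiv G') := by
  have hG := extends_of_leOf G.2
  have hG' := extends_of_leOf G'.2
  rw [leOf_covSF_iff_extends, leOf_covSF_iff_extends]
  change Extends G.1.1 G'.1.1 ↔ Extends (rootForest m σ τ G.1.1) (rootForest m σ τ G'.1.1)
  rw [← hR.extends_graft_iff (hR.sfvalid_rootForest hG G.1.2) (hR.sfvalid_rootForest hG' G'.1.2),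
    hR.graft_rootForest hG G.1.2, hR.graft_rootForest hG' G'.1.2]

end UpperSet

/-- Reiner's poset of rooted spanning forests `SFₙ` is uniform: the
principal upper filter of an element of rank `i` (a forest with `i` edges, hence `n - i`
rooted trees) is isomorphic as a poset to `SF_{n-i}`. -/
theorem SF_uniform (n : ℕ) (F : SF n) (i : ℕ) (h : rkSF F = i) :
    ∃ e : {G : SF n // leOf covSF F G} ≃ SF (n - i),
      ∀ G G', leOf covSF G.1 G'.1 ↔ leOf covSF (e G) (e G') := by
  obtain ⟨σ, τ, hR⟩ := exists_isRootRelabel n F.1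
  rw [card_roots, h] at hR
  exact ⟨hR.upperEquiv, hR.leOf_iff_leOf_upperEquiv⟩
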